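/- Let U0 = [[A0,B0],[C0,D0]] : X0 × D → X0 × D* and U1 = [[A1,B1],[C1,D1]] : X1 × D* → X1 × D be linear block maps between complex vector spaces, and define the input-output maps W(U0)⁺ : (ℕ → D) → (ℕ → D*) by (W(U0)⁺ e)(n) = D0 e(n) + Σ_{k=0}^{n−1} C0 A0^{n−1−k} B0 e(k), and W(U1)⁺ : (ℕ → D*) → (ℕ → D) by the analogous formula with A1, B1, C1, D1. If I − D1∘D0 is bijective on D, then I − W(U1)⁺∘W(U0)⁺ is bijective on the space of all D-valued sequences ℕ → D. -/
import Mathlib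


/-- The (forward-time) input-output map of the discrete-time system associated with the
colligation `U = [[A,B],[C,Dop]] : X × E → X × Es`, with zero initial state:
`(W e)(n) = Dop e(n) + ∑_{k=0}^{n−1} C A^{n−1−k} B e(k)`. -/
noncomputable def ioMap {X E Es : Type*}
    [AddCommGroup X] [Module ℂ X] [AddCommGroup E] [Module ℂ E]
    [AddCommGroup Es] [Module ℂ Es]
    (A : X →ₗ[ℂ] X) (B : E →ₗ[ℂ] X) (C : X →ₗ[ℂ] Es) (Dop : E →ₗ[ℂ] Es) :
    (ℕ → E) → (ℕ → Es) :=
  fun e n => Dop (e n) + ∑ k ∈ Finset.range n, C ((A ^ (n - 1 - k)) (B (e k)))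

lemma ioMap_causal {X E Es : Type*}
    [AddCommGroup X] [Module ℂ X] [AddCommGroup E] [Module ℂ E]
    [AddCommGroup Es] [Module ℂ Es]
    (A : X →ₗ[ℂ] X) (B : E →ₗ[ℂ] X) (C : X →ₗ[ℂ] Es) (Dop : E →ₗ[ℂ] Es)
    (e e' : ℕ → E) (n : ℕ) (h : ∀ k ≤ n, e k = e' k) :
    ioMap A B C Dop e n = ioMap A B C Dop e' n := by
  unfold ioMap
  rw [h n le_rfl]
  congr 1
  refine Finset.sum_congr rfl fun k hk => ?_
  rw [h k (le_of_lt (Finset.mem_range.mp hk))]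

section Aux

variable {X0 X1 D Ds : Type*}
    [AddCommGroup X0] [Module ℂ X0] [AddCommGroup X1] [Module ℂ X1]
    [AddCommGroup D] [Module ℂ D] [AddCommGroup Ds] [Module ℂ Ds]
    (A0 : X0 →ₗ[ℂ] X0) (B0 : D →ₗ[ℂ] X0) (C0 : X0 →ₗ[ℂ] Ds) (D0 : D →ₗ[ℂ] Ds)
    (A1 : X1 →ₗ[ℂ] X1) (B1 : Ds →ₗ[ℂ] X1) (C1 : X1 →ₗ[ℂ] D) (D1 : Ds →ₗ[ℂ] D)

/-- The strictly causal part of the composite input-output map. -/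
noncomputable def gMap (e : ℕ → D) (n : ℕ) : D :=
  ioMap A1 B1 C1 D1 (ioMap A0 B0 C0 D0 e) n - D1 (D0 (e n))

lemma gMap_eq (e : ℕ → D) (n : ℕ) :
    gMap A0 B0 C0 D0 A1 B1 C1 D1 e n =
      D1 (∑ k ∈ Finset.range n, C0 ((A0 ^ (n - 1 - k)) (B0 (e k)))) +
        ∑ k ∈ Finset.range n, C1 ((A1 ^ (n - 1 - k)) (B1 (ioMap A0 B0 C0 D0 e k))) := by
  unfold gMap
  conv_lhs => rw [show ioMap A1 B1 C1 D1 (ioMap A0 B0 C0 D0 e) n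
    = D1 (ioMap A0 B0 C0 D0 e n)
      + ∑ k ∈ Finset.range n, C1 ((A1 ^ (n - 1 - k)) (B1 (ioMap A0 B0 C0 D0 e k))) from rfl]
  rw [show ioMap A0 B0 C0 D0 e n
    = D0 (e n) + ∑ k ∈ Finset.range n, C0 ((A0 ^ (n - 1 - k)) (B0 (e k))) from rfl]
  rw [map_add]
  abel

lemma gMap_causal (e e' : ℕ → D) (n : ℕ) (h : ∀ k < n, e k = e' k) :
    gMap A0 B0 C0 D0 A1 B1 C1 D1 e n = gMap A0 B0 C0 D0 A1 B1 C1 D1 e' n := by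
  rw [gMap_eq, gMap_eq]
  congr 1
  · congr 1
    refine Finset.sum_congr rfl fun k hk => ?_
    rw [h k (Finset.mem_range.mp hk)]
  · refine Finset.sum_congr rfl fun k hk => ?_
    have hk' := Finset.mem_range.mp hk
    rw [ioMap_causal A0 B0 C0 D0 e e' k (fun j hj => h j (lt_of_le_of_lt hj hk'))]

/-- A sequence built by strong recursion: `seqRec F m` is the sequence determined
up to index `m` (and `0` beyond). -/
noncomputable def seqRec {D : Type*} [AddCommGroup D]
    (F : (ℕ → D) → ℕ → D) : ℕ → (ℕ → D)
  | 0 => fun _ => 0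
  | n + 1 => fun k => if k = n then F (seqRec F n) n else seqRec F n k

lemma seqRec_lt {D : Type*} [AddCommGroup D]
    (F : (ℕ → D) → ℕ → D) : ∀ m k, k < m → seqRec F m k = seqRec F (k + 1) k := by
  intro m
  induction m with
  | zero => intro k hk; omega
  | succ n ih =>
    intro k hk
    rcases Nat.lt_succ_iff_lt_or_eq.mp hk with hk' | rfl
    · have : seqRec F (n + 1) k = seqRec F n k := by
        show (if k = n then _ else _) = _
        rw [if_neg (by omega)]
      rw [this, ih k hk']
    · rfl

end Aux

/-- If `I − D1∘D0` is bijective on `D`, then `I − W(U1)⁺∘W(U0)⁺` is bijective on the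
space of all `D`-valued sequences `ℕ → D`. -/
theorem stmt_1 {X0 X1 D Ds : Type*}
    [AddCommGroup X0] [Module ℂ X0] [AddCommGroup X1] [Module ℂ X1]
    [AddCommGroup D] [Module ℂ D] [AddCommGroup Ds] [Module ℂ Ds]
    (A0 : X0 →ₗ[ℂ] X0) (B0 : D →ₗ[ℂ] X0) (C0 : X0 →ₗ[ℂ] Ds) (D0 : D →ₗ[ℂ] Ds)
    (A1 : X1 →ₗ[ℂ] X1) (B1 : Ds →ₗ[ℂ] X1) (C1 : X1 →ₗ[ℂ] D) (D1 : Ds →ₗ[ℂ] D)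
    (hbij : Function.Bijective (LinearMap.id - D1 ∘ₗ D0 : D →ₗ[ℂ] D)) :
    Function.Bijective
      (fun e : ℕ → D => e - ioMap A1 B1 C1 D1 (ioMap A0 B0 C0 D0 e)) := by
  set L : D →ₗ[ℂ] D := LinearMap.id - D1 ∘ₗ D0 with hL
  set g := gMap A0 B0 C0 D0 A1 B1 C1 D1 with hg
  have hT : ∀ (e : ℕ → D) (n : ℕ),
      e n - ioMap A1 B1 C1 D1 (ioMap A0 B0 C0 D0 e) n = L (e n) - g e n := by
    intro e n
    simp only [hg, gMap, hL, LinearMap.sub_apply, LinearMap.id_apply, LinearMap.comp_apply]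
    abel
  set E := LinearEquiv.ofBijective L hbij with hE
  constructor
  · intro e e' h
    have h' : ∀ n, e n - ioMap A1 B1 C1 D1 (ioMap A0 B0 C0 D0 e) n
        = e' n - ioMap A1 B1 C1 D1 (ioMap A0 B0 C0 D0 e') n := by
      intro n
      have := congrFun h n
      simpa [Pi.sub_apply] using this
    have key : ∀ n, e n = e' n := by
      intro n
      induction n using Nat.strong_induction_on with
      | _ n ih =>
        have h1 := h' n
        have hgc : g e n = g e' n := gMap_causal A0 B0 C0 D0 A1 B1 C1 D1 e e' n ih
        rw [hT e n, hT e' n, hgc] at h1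
        have h2 : L (e n) = L (e' n) := by
          have := sub_left_injective h1
          exact this
        exact hbij.1 h2
    funext n
    exact key n
  · intro f
    set F : (ℕ → D) → ℕ → D := fun p n => E.symm (f n + g p n) with hF
    set e : ℕ → D := fun n => seqRec F (n + 1) n with he
    refine ⟨e, ?_⟩
    funext n
    have hen : e n = E.symm (f n + g (seqRec F n) n) := by
      show (if n = n then F (seqRec F n) n else seqRec F n n) = _
      rw [if_pos rfl]
    have hgen : g (seqRec F n) n = g e n := by
      refine gMap_causal A0 B0 C0 D0 A1 B1 C1 D1 _ _ n fun k hk => ?_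
      exact seqRec_lt F n k hk
    have hLE : ∀ x : D, L (E.symm x) = x := fun x => E.apply_symm_apply x
    show e n - ioMap A1 B1 C1 D1 (ioMap A0 B0 C0 D0 e) n = f n
    rw [hT e n, hen, hLE, hgen]
    abel
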